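/- arXiv:2101.11407 — 8 statements merged into one kernel-verified Lean document; each statement's English description precedes it below -/
import Mathlib

section
/- Let (aₙ)ₙ be a sequence of positive reals and r > 0. Suppose Cᵣ := sup_n Nₙ^r·aₙ < ∞ where Nₙ ≥ 1 are positive reals, and suppose there are constants C ≥ 1 and 0 < q < 1 with aₙ ≤ C·q^(n−m)·aₘ for all n ≥ m. Then the cumulative quantities Wₙ := ∑_{m≤n} Nₘ satisfy sup_n Wₙ^r·aₙ ≤ C·(1 − q^(1/r))^{−r}·Cᵣ. -/
theorem stmt_2 (r : ℝ) (hr : 0 < r) (a N : ℕ → ℝ)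
    (ha : ∀ n, 0 < a n) (hN : ∀ n, 1 ≤ N n)
    (Cr : ℝ) (hCr : ∀ n, (N n) ^ r * a n ≤ Cr)
    (C q : ℝ) (hC : 1 ≤ C) (hq0 : 0 < q) (hq1 : q < 1)
    (hlin : ∀ m n : ℕ, m ≤ n → a n ≤ C * q ^ (n - m) * a m) :
    ∀ n : ℕ, (∑ m ∈ Finset.range (n + 1), N m) ^ r * a n ≤
      C * (1 - q ^ (1 / r)) ^ (-r) * Cr := by
  intro n
  set s : ℝ := q ^ (1 / r) with hs
  have hs0 : 0 < s := Real.rpow_pos_of_pos hq0 _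
  have hs1 : s < 1 := Real.rpow_lt_one hq0.le hq1 (one_div_pos.mpr hr)
  have hCrpos : 0 < Cr := by
    have h1 : (1:ℝ) ≤ (N 0) ^ r := Real.one_le_rpow (hN 0) hr.le
    have := hCr 0
    nlinarith [ha 0]
  set K : ℝ := (C * Cr / a n) ^ (1 / r) with hK
  have hbase : 0 ≤ C * Cr / a n := div_nonneg (mul_nonneg (by linarith) hCrpos.le) (ha n).le
  -- pointwise bound on N m
  have key : ∀ m ∈ Finset.range (n + 1), N m ≤ K * s ^ (n - m) := by
    intro m hm
    have hmn : m ≤ n := Nat.lt_succ_iff.mp (Finset.mem_range.mp hm)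
    have hNm : (0:ℝ) < N m := lt_of_lt_of_le one_pos (hN m)
    have h1 : (N m) ^ r * a m ≤ Cr := hCr m
    have h2 : a n ≤ C * q ^ (n - m) * a m := hlin m n hmn
    have h3 : (N m) ^ r ≤ C * Cr / a n * q ^ (n - m) := by
      have hq' : (0:ℝ) < q ^ (n - m) := pow_pos hq0 _
      have hrm : (0:ℝ) < (N m) ^ r := Real.rpow_pos_of_pos hNm r
      have h4 : (N m) ^ r * a n ≤ (N m) ^ r * (C * q ^ (n - m) * a m) :=
        mul_le_mul_of_nonneg_left h2 hrm.le
      have h5 : (N m) ^ r * (C * q ^ (n - m) * a m) ≤ C * q ^ (n - m) * Cr := by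
        calc (N m) ^ r * (C * q ^ (n - m) * a m)
            = C * q ^ (n - m) * ((N m) ^ r * a m) := by ring
          _ ≤ C * q ^ (n - m) * Cr := by
              apply mul_le_mul_of_nonneg_left h1
              positivity
      rw [div_mul_eq_mul_div, le_div_iff₀ (ha n)]
      calc (N m) ^ r * a n ≤ C * q ^ (n - m) * Cr := h4.trans h5
        _ = C * Cr * q ^ (n - m) := by ring
    have h6 : ((N m) ^ r) ^ (1 / r) ≤ (C * Cr / a n * q ^ (n - m)) ^ (1 / r) :=
      Real.rpow_le_rpow (by positivity) h3 (by positivity)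
    have h7 : ((N m) ^ r) ^ (1 / r) = N m := by
      rw [← Real.rpow_mul hNm.le, mul_one_div, div_self hr.ne', Real.rpow_one]
    have h8 : (q ^ (n - m) : ℝ) ^ (1 / r) = s ^ (n - m) := by
      rw [← Real.rpow_natCast q (n - m), ← Real.rpow_mul hq0.le,
        mul_comm ((n - m : ℕ) : ℝ) (1 / r), Real.rpow_mul hq0.le,
        Real.rpow_natCast]
    have h9 : (C * Cr / a n * q ^ (n - m)) ^ (1 / r) = K * s ^ (n - m) := by
      rw [Real.mul_rpow hbase (by positivity), h8]
    rw [h7, h9] at h6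
    exact h6
  have hsum : (∑ m ∈ Finset.range (n + 1), N m) ≤ K * (1 - s)⁻¹ := by
    calc (∑ m ∈ Finset.range (n + 1), N m)
        ≤ ∑ m ∈ Finset.range (n + 1), K * s ^ (n - m) :=
          Finset.sum_le_sum key
      _ = K * ∑ m ∈ Finset.range (n + 1), s ^ (n - m) := by
          rw [Finset.mul_sum]
      _ = K * ∑ k ∈ Finset.range (n + 1), s ^ k := by
          congr 1
          have := Finset.sum_range_reflect (fun i => s ^ i) (n + 1)
          simpa using this
      _ ≤ K * (1 - s)⁻¹ := by
          apply mul_le_mul_of_nonneg_left _ (Real.rpow_nonneg hbase _)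
          have hgeom : ∑ k ∈ Finset.range (n + 1), s ^ k
              = (1 - s ^ (n + 1)) / (1 - s) := by
            rw [geom_sum_eq hs1.ne]
            rw [div_eq_div_iff (by linarith) (by linarith)]
            ring
          rw [hgeom, div_eq_mul_inv]
          have hpow : 0 ≤ s ^ (n + 1) := by positivity
          have : (1 - s ^ (n + 1)) ≤ 1 := by linarith
          have hinv : (0:ℝ) ≤ (1 - s)⁻¹ := inv_nonneg.mpr (by linarith)
          nlinarith
  have hW0 : (0:ℝ) ≤ ∑ m ∈ Finset.range (n + 1), N m :=
    Finset.sum_nonneg fun m _ => le_trans zero_le_one (hN m)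
  have hWr : (∑ m ∈ Finset.range (n + 1), N m) ^ r ≤ (K * (1 - s)⁻¹) ^ r :=
    Real.rpow_le_rpow hW0 hsum hr.le
  have hKr : (K * (1 - s)⁻¹) ^ r = (C * Cr / a n) * (1 - s) ^ (-r) := by
    rw [Real.mul_rpow (Real.rpow_nonneg hbase _) (inv_nonneg.mpr (by linarith))]
    congr 1
    · rw [← Real.rpow_mul hbase, one_div_mul_cancel hr.ne', Real.rpow_one]
    · rw [Real.inv_rpow (by linarith : (0:ℝ) ≤ 1 - s),
        ← Real.rpow_neg (by linarith : (0:ℝ) ≤ 1 - s)]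
  rw [hKr] at hWr
  calc (∑ m ∈ Finset.range (n + 1), N m) ^ r * a n
      ≤ (C * Cr / a n) * (1 - s) ^ (-r) * a n :=
        mul_le_mul_of_nonneg_right hWr (ha n).le
    _ = C * (1 - s) ^ (-r) * Cr := by
        rw [div_mul_eq_mul_div, div_mul_eq_mul_div, mul_div_cancel_right₀ _ (ha n).ne']
        ring
end

section
/- Suppose a, b, c, d ≥ 0, 0 < q_red < 1, 0 < θ ≤ 1, and suppose the marking inequality 2θ·a²·b² ≤ aₘ²·b² + a²·bₘ² holds, where 0 ≤ aₘ ≤ a and 0 ≤ bₘ ≤ b. If a'² ≤ a² − (1 − q_red²)·aₘ² and b'² ≤ b² − (1 − q_red²)·bₘ², then a'·b' ≤ q_θ·a·b with q_θ := 1 − (1 − q_red²)·θ. -/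
private lemma aux_key (x y xm ym x' y' ε θ : ℝ)
    (hx : 0 < x) (hy : 0 < y)
    (hε0 : 0 < ε) (hε1 : ε < 1) (hθ0 : 0 < θ) (hθ1 : θ ≤ 1)
    (hxm0 : 0 ≤ xm) (hxm : xm ≤ x) (hym0 : 0 ≤ ym) (hym : ym ≤ y)
    (hx'0 : 0 ≤ x') (hy'0 : 0 ≤ y')
    (hmark : 2 * θ * x * y ≤ xm * y + x * ym)
    (hx' : x' ≤ x - ε * xm) (hy' : y' ≤ y - ε * ym) :
    x' * y' ≤ (1 - ε * θ) ^ 2 * (x * y) := by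
  set s := xm * y + x * ym with hs
  have hxy : 0 < x * y := mul_pos hx hy
  have hs2 : s ≤ 2 * (x * y) := by nlinarith
  have hθs : 2 * θ * (x * y) ≤ s := by nlinarith
  have hamgm : 4 * (x * y) * (xm * ym) ≤ s ^ 2 := by nlinarith [sq_nonneg (xm * y - x * ym)]
  have h1 : x' * y' ≤ (x - ε * xm) * (y - ε * ym) :=
    mul_le_mul hx' hy' hy'0 (le_trans hx'0 hx')
  have h2 : x' * y' * (4 * (x * y)) ≤ (1 - ε * θ) ^ 2 * (x * y) * (4 * (x * y)) := by
    have hεθ : 0 ≤ 4 - 2 * ε - 2 * ε * θ := by nlinarith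
    have hint1 : 0 ≤ ε ^ 2 * (2 * (x * y) - s) * (s - 2 * θ * (x * y)) :=
      mul_nonneg (mul_nonneg (sq_nonneg ε) (by linarith)) (by linarith)
    have hint2 : 0 ≤ ε * (x * y) * (s - 2 * θ * (x * y)) * (4 - 2 * ε - 2 * ε * θ) :=
      mul_nonneg (mul_nonneg (mul_nonneg hε0.le hxy.le) (by linarith)) hεθ
    have hexp : (x - ε * xm) * (y - ε * ym) * (4 * (x * y))
        = (x * y - ε * s) * (4 * (x * y)) + ε ^ 2 * (4 * (x * y) * (xm * ym)) := by
      rw [hs]; ring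
    have hstep : x' * y' * (4 * (x * y)) ≤ (x * y - ε * s) * (4 * (x * y)) + ε ^ 2 * s ^ 2 := by
      have := mul_le_mul_of_nonneg_right h1 (by positivity : (0:ℝ) ≤ 4 * (x * y))
      rw [hexp] at this
      nlinarith [mul_le_mul_of_nonneg_left hamgm (sq_nonneg ε)]
    refine le_trans hstep ?_
    nlinarith [hint1, hint2]
  exact le_of_mul_le_mul_right h2 (by positivity)

set_option maxHeartbeats 1000000 in
theorem stmt_3 (a b am bm a' b' qred θ : ℝ)
    (ha : 0 ≤ a) (hb : 0 ≤ b) (ha' : 0 ≤ a') (hb' : 0 ≤ b')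
    (hqred0 : 0 < qred) (hqred1 : qred < 1) (hθ0 : 0 < θ) (hθ1 : θ ≤ 1)
    (ham0 : 0 ≤ am) (ham : am ≤ a) (hbm0 : 0 ≤ bm) (hbm : bm ≤ b)
    (hmark : 2 * θ * a ^ 2 * b ^ 2 ≤ am ^ 2 * b ^ 2 + a ^ 2 * bm ^ 2)
    (hared : a' ^ 2 ≤ a ^ 2 - (1 - qred ^ 2) * am ^ 2)
    (hbred : b' ^ 2 ≤ b ^ 2 - (1 - qred ^ 2) * bm ^ 2) :
    a' * b' ≤ (1 - (1 - qred ^ 2) * θ) * (a * b) := by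
  have hε0 : 0 < 1 - qred ^ 2 := by nlinarith
  have hε1 : 1 - qred ^ 2 < 1 := by nlinarith
  have hεθ : 0 ≤ 1 - (1 - qred ^ 2) * θ := by nlinarith
  have hrhs : 0 ≤ (1 - (1 - qred ^ 2) * θ) * (a * b) := mul_nonneg hεθ (mul_nonneg ha hb)
  rcases eq_or_lt_of_le ha with h0 | hapos
  · have ham' : am = 0 := le_antisymm (by linarith) ham0
    have h7 : a' ^ 2 ≤ 0 := by rw [ham', ← h0] at hared; simpa using hared
    have ha'0 : a' = 0 := by nlinarith [sq_nonneg a']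
    rw [ha'0, zero_mul]; exact hrhs
  rcases eq_or_lt_of_le hb with h0 | hbpos
  · have hbm' : bm = 0 := le_antisymm (by linarith) hbm0
    have h7 : b' ^ 2 ≤ 0 := by rw [hbm', ← h0] at hbred; simpa using hbred
    have hb'0 : b' = 0 := by nlinarith [sq_nonneg b']
    rw [hb'0, mul_zero]; exact hrhs
  have hkey := aux_key (a ^ 2) (b ^ 2) (am ^ 2) (bm ^ 2) (a' ^ 2) (b' ^ 2)
    (1 - qred ^ 2) θ (by positivity) (by positivity) hε0 hε1 hθ0 hθ1
    (sq_nonneg am) (by nlinarith) (sq_nonneg bm) (by nlinarith)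
    (sq_nonneg a') (sq_nonneg b') (by nlinarith) hared hbred
  have hkey' : (a' * b') ^ 2 ≤ ((1 - (1 - qred ^ 2) * θ) * (a * b)) ^ 2 := by
    calc (a' * b') ^ 2 = a' ^ 2 * b' ^ 2 := by ring
    _ ≤ (1 - (1 - qred ^ 2) * θ) ^ 2 * (a ^ 2 * b ^ 2) := hkey
    _ = ((1 - (1 - qred ^ 2) * θ) * (a * b)) ^ 2 := by ring
  exact (pow_le_pow_iff_left₀ (mul_nonneg ha' hb') hrhs two_ne_zero).1 hkey'
end

section
/- Let 0 < q < 1 and λ > 0 with 0 < λ < (1 − q)/(q·C_stab) =: λ⋆ for some C_stab > 0. Suppose ‖u⋆ − uₘ‖ ≤ (q/(1−q))·‖uₘ − uₘ₋₁‖, the stopping criterion ‖uₘ − uₘ₋₁‖ ≤ λ·η(uₘ), and the stability |η(v) − η(w)| ≤ C_stab·‖v − w‖ for all v, w. Then (1 − λ/λ⋆)·η(uₘ) ≤ η(u⋆) ≤ (1 + λ/λ⋆)·η(uₘ). -/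
theorem stmt_4 {X : Type*} [NormedAddCommGroup X] [NormedSpace ℝ X]
    (q lam Cstab : ℝ) (hq0 : 0 < q) (hq1 : q < 1) (hCstab : 0 < Cstab)
    (hlam0 : 0 < lam) (hlam : lam < (1 - q) / (q * Cstab))
    (η : X → ℝ) (ustar um umm : X)
    (hctr : ‖ustar - um‖ ≤ q / (1 - q) * ‖um - umm‖)
    (hstop : ‖um - umm‖ ≤ lam * η um)
    (hstab : ∀ v w : X, |η v - η w| ≤ Cstab * ‖v - w‖) :
    (1 - lam / ((1 - q) / (q * Cstab))) * η um ≤ η ustar ∧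
    η ustar ≤ (1 + lam / ((1 - q) / (q * Cstab))) * η um := by
  have h1q : 0 < 1 - q := by linarith
  have hηum : 0 ≤ η um := by
    nlinarith [norm_nonneg (um - umm)]
  have key : |η ustar - η um| ≤ lam / ((1 - q) / (q * Cstab)) * η um := by
    have h := hstab ustar um
    have : Cstab * ‖ustar - um‖ ≤ Cstab * (q / (1 - q) * (lam * η um)) := by
      have : ‖ustar - um‖ ≤ q / (1 - q) * (lam * η um) := by
        calc ‖ustar - um‖ ≤ q / (1 - q) * ‖um - umm‖ := hctr
        _ ≤ q / (1 - q) * (lam * η um) := by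
            apply mul_le_mul_of_nonneg_left hstop (by positivity)
      nlinarith
    have heq : lam / ((1 - q) / (q * Cstab)) * η um
        = Cstab * (q / (1 - q) * (lam * η um)) := by
      field_simp
    rw [heq]
    linarith
  have h2 := abs_le.mp key
  constructor <;> nlinarith [h2.1, h2.2]
end

section
/- Under the assumptions of Lemma 6.3(i) (contraction with factor q, stopping with parameter λ < λ⋆ = (1−q)/(q·C_stab), and stability of η), and additionally assuming the restricted estimator satisfies |η(U, v) − η(U, w)| ≤ C_stab·‖v − w‖ for every subset contribution η(U, ·) ≤ η(·): if Θ'·η(u⋆)² ≤ η(U, u⋆)² with √Θ' = (√Θ + λ/λ⋆)/(1 − λ/λ⋆), then Θ·η(uₘ)² ≤ η(U, uₘ)². -/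
theorem stmt_5 {X : Type*} [NormedAddCommGroup X] [NormedSpace ℝ X]
    (q lam Cstab Θ : ℝ) (hq0 : 0 < q) (hq1 : q < 1) (hCstab : 0 < Cstab)
    (hlam0 : 0 < lam) (hlam : lam < (1 - q) / (q * Cstab)) (hΘ0 : 0 < Θ)
    (η ηU : X → ℝ) (ustar um umm : X)
    (hη0 : ∀ v, 0 ≤ η v) (hηU0 : ∀ v, 0 ≤ ηU v)
    (hsub : ∀ v, ηU v ≤ η v)
    (hctr : ‖ustar - um‖ ≤ q / (1 - q) * ‖um - umm‖)
    (hstop : ‖um - umm‖ ≤ lam * η um)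
    (hstab : ∀ v w : X, |η v - η w| ≤ Cstab * ‖v - w‖)
    (hstabU : ∀ v w : X, |ηU v - ηU w| ≤ Cstab * ‖v - w‖)
    (hmark : ((Real.sqrt Θ + lam / ((1 - q) / (q * Cstab))) /
        (1 - lam / ((1 - q) / (q * Cstab)))) ^ 2 * (η ustar) ^ 2
        ≤ (ηU ustar) ^ 2) :
    Θ * (η um) ^ 2 ≤ (ηU um) ^ 2 := by
  have hq1' : 0 < 1 - q := by linarith
  have hL0 : 0 < (1 - q) / (q * Cstab) := div_pos hq1' (mul_pos hq0 hCstab)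
  set L := (1 - q) / (q * Cstab) with hL
  set ρ := lam / L with hρ
  have hρ0 : 0 < ρ := div_pos hlam0 hL0
  have hρ1 : ρ < 1 := (div_lt_one hL0).mpr hlam
  have hs : 0 ≤ Real.sqrt Θ := Real.sqrt_nonneg Θ
  set s := Real.sqrt Θ with hsdef
  have hsΘ : s ^ 2 = Θ := Real.sq_sqrt hΘ0.le
  set T := (s + ρ) / (1 - ρ) with hT
  have hT0 : 0 ≤ T := div_nonneg (by linarith) (by linarith)
  have hTρ : T * (1 - ρ) = s + ρ := div_mul_cancel₀ _ (by linarith : (1:ℝ) - ρ ≠ 0)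
  -- step 1: Cstab * ‖ustar - um‖ ≤ ρ * η um
  have h1 : Cstab * ‖ustar - um‖ ≤ ρ * η um := by
    have ha : Cstab * ‖ustar - um‖ ≤ Cstab * (q / (1 - q) * ‖um - umm‖) :=
      mul_le_mul_of_nonneg_left hctr hCstab.le
    have hb : Cstab * (q / (1 - q) * ‖um - umm‖) ≤ Cstab * (q / (1 - q) * (lam * η um)) := by
      apply mul_le_mul_of_nonneg_left _ hCstab.le
      exact mul_le_mul_of_nonneg_left hstop (by positivity)
    have heq : Cstab * (q / (1 - q) * (lam * η um)) = ρ * η um := by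
      rw [hρ, hL]; field_simp
    linarith
  -- step 2: η um - η ustar ≤ ρ * η um
  have h2 : η um - η ustar ≤ ρ * η um := by
    have := (abs_le.mp (hstab um ustar)).2
    rw [norm_sub_rev] at this
    linarith
  -- step 3: ηU ustar - ηU um ≤ ρ * η um
  have h3 : ηU ustar - ηU um ≤ ρ * η um := by
    have := (abs_le.mp (hstabU ustar um)).2
    linarith
  -- step 4: T * η ustar ≤ ηU ustar
  have h4 : T * η ustar ≤ ηU ustar := by
    have hm : T ^ 2 * (η ustar) ^ 2 ≤ (ηU ustar) ^ 2 := hmark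
    nlinarith [mul_nonneg hT0 (hη0 ustar), hηU0 ustar]
  -- step 5: s * η um ≤ ηU um
  have h5 : s * η um ≤ ηU um := by
    have hst : (1 - ρ) * η um ≤ η ustar := by nlinarith
    have := mul_le_mul_of_nonneg_left hst hT0
    have key : T * ((1 - ρ) * η um) = (s + ρ) * η um := by rw [← mul_assoc, hTρ]
    nlinarith
  nlinarith [mul_nonneg hs (hη0 um)]
end

section
/- Let 0 < q_ctr < 1, μ > 0, C_stab > 0 with q_ctr + 2μ·C_stab ≤ 1. Suppose ‖u⋆ − u_k‖ ≤ q_ctr^{k−j}·‖u⋆ − u_j‖ for all j ≤ k, and |η(u_k) − η(u_j)| ≤ C_stab·‖u_k − u_j‖. Then for all 0 ≤ j ≤ k it holds that ‖u⋆ − u_k‖ + μ·η(u_k) ≤ ‖u⋆ − u_j‖ + μ·η(u_j). -/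
theorem stmt_10 {X : Type*} [NormedAddCommGroup X] [NormedSpace ℝ X]
    (qctr μ Cstab : ℝ) (hq0 : 0 < qctr) (hq1 : qctr < 1) (hμ : 0 < μ)
    (hCstab : 0 < Cstab) (hsmall : qctr + 2 * μ * Cstab ≤ 1)
    (η : X → ℝ) (ustar : X) (u : ℕ → X)
    (hctr : ∀ j k : ℕ, j ≤ k → ‖ustar - u k‖ ≤ qctr ^ (k - j) * ‖ustar - u j‖)
    (hstab : ∀ j k : ℕ, |η (u k) - η (u j)| ≤ Cstab * ‖u k - u j‖) :
    ∀ j k : ℕ, j ≤ k →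
      ‖ustar - u k‖ + μ * η (u k) ≤ ‖ustar - u j‖ + μ * η (u j) := by
  intro j k hjk
  rcases eq_or_lt_of_le hjk with rfl | hlt
  · exact le_refl _
  have hkj : ‖ustar - u k‖ ≤ qctr ^ (k - j) * ‖ustar - u j‖ := hctr j k hjk
  have hη : η (u k) - η (u j) ≤ Cstab * ‖u k - u j‖ :=
    (abs_le.mp (hstab j k)).2
  have htri : ‖u k - u j‖ ≤ ‖ustar - u k‖ + ‖ustar - u j‖ := by
    have : u k - u j = -(ustar - u k) + (ustar - u j) := by abel
    rw [this]
    calc ‖-(ustar - u k) + (ustar - u j)‖ ≤ ‖-(ustar - u k)‖ + ‖ustar - u j‖ :=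
          norm_add_le _ _
      _ = ‖ustar - u k‖ + ‖ustar - u j‖ := by rw [norm_neg]
  have hq : qctr ^ (k - j) ≤ qctr := by
    have h1 : 1 ≤ k - j := Nat.one_le_iff_ne_zero.mpr (by omega)
    calc qctr ^ (k - j) ≤ qctr ^ 1 :=
          pow_le_pow_of_le_one hq0.le hq1.le h1
      _ = qctr := pow_one _
  have hnormj : 0 ≤ ‖ustar - u j‖ := norm_nonneg _
  have hC : (0:ℝ) ≤ μ * Cstab := mul_nonneg hμ.le hCstab.le
  have h1 : μ * η (u k) ≤ μ * η (u j) + μ * Cstab * (‖ustar - u k‖ + ‖ustar - u j‖) := by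
    have : η (u k) ≤ η (u j) + Cstab * (‖ustar - u k‖ + ‖ustar - u j‖) := by
      nlinarith [mul_le_mul_of_nonneg_left htri hCstab.le]
    nlinarith [mul_le_mul_of_nonneg_left this hμ.le]
  have hcoef : (1 + μ * Cstab) * qctr + μ * Cstab ≤ 1 := by nlinarith
  have h1C : (0:ℝ) ≤ 1 + μ * Cstab := by linarith
  have h2 : (1 + μ * Cstab) * ‖ustar - u k‖ ≤ (1 + μ * Cstab) * (qctr ^ (k - j) * ‖ustar - u j‖) :=
    mul_le_mul_of_nonneg_left hkj h1C
  have h3 : (1 + μ * Cstab) * (qctr ^ (k - j) * ‖ustar - u j‖) ≤ (1 + μ * Cstab) * (qctr * ‖ustar - u j‖) :=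
    mul_le_mul_of_nonneg_left (mul_le_mul_of_nonneg_right hq hnormj) h1C
  have h4 : ((1 + μ * Cstab) * qctr + μ * Cstab) * ‖ustar - u j‖ ≤ 1 * ‖ustar - u j‖ :=
    mul_le_mul_of_nonneg_right hcoef hnormj
  nlinarith [h1, h2, h3, h4]
end

section
/- Suppose ‖u⋆ − u_K‖ =: α_K, ‖u_K − u_{K−1}‖ ≤ λ·η(u_K), |η(u_{K−1}) − η(u_K)| ≤ C_stab·‖u_K − u_{K−1}‖, and the triangle inequality. Then α_{K−1} + μ·η(u_{K−1}) ≤ (1 + λ·(C_stab + μ⁻¹))·(α_K + μ·η(u_K)), where α_{K−1} := ‖u⋆ − u_{K−1}‖ and λ, μ, C_stab > 0. -/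
theorem stmt_11 {X : Type*} [NormedAddCommGroup X] [NormedSpace ℝ X]
    (lam μ Cstab : ℝ) (hlam : 0 < lam) (hμ : 0 < μ) (hCstab : 0 < Cstab)
    (η : X → ℝ) (hη : ∀ v, 0 ≤ η v) (ustar uK uKm : X)
    (hstop : ‖uK - uKm‖ ≤ lam * η uK)
    (hstab : |η uKm - η uK| ≤ Cstab * ‖uK - uKm‖) :
    ‖ustar - uKm‖ + μ * η uKm ≤
      (1 + lam * (Cstab + μ⁻¹)) * (‖ustar - uK‖ + μ * η uK) := by
  have htri : ‖ustar - uKm‖ ≤ ‖ustar - uK‖ + ‖uK - uKm‖ := by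
    simpa using norm_sub_le_norm_sub_add_norm_sub ustar uK uKm
  have habs : η uKm - η uK ≤ Cstab * ‖uK - uKm‖ := (abs_le.mp hstab).2
  have hn : 0 ≤ ‖ustar - uK‖ := norm_nonneg _
  have h1 : μ * (η uKm - η uK) ≤ μ * (Cstab * ‖uK - uKm‖) :=
    mul_le_mul_of_nonneg_left habs hμ.le
  have h2 : μ * (Cstab * ‖uK - uKm‖) ≤ μ * (Cstab * (lam * η uK)) :=
    mul_le_mul_of_nonneg_left (mul_le_mul_of_nonneg_left hstop hCstab.le) hμ.le
  have hinv : lam * (μ⁻¹ * (μ * η uK)) = lam * η uK := by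
    field_simp
  nlinarith [mul_nonneg (mul_nonneg hlam.le hCstab.le) hn,
    mul_nonneg (mul_nonneg hlam.le (inv_nonneg.mpr hμ.le)) hn]
end

section
/- Let 0 < q_ctr < 1, λ > 0, μ > 0 with q_ctr + μ·λ⁻¹·(1 + q_ctr) < 1. Suppose ‖u⋆ − u_k‖ ≤ q_ctr·‖u⋆ − u_{k−1}‖, ‖u_k − u_{k−1}‖ ≤ (1 + q_ctr)·‖u⋆ − u_{k−1}‖, and the stopping criterion fails at step k, i.e., ‖u_k − u_{k−1}‖ > λ·η(u_k). Then ‖u⋆ − u_k‖ + μ·η(u_k) ≤ (q_ctr + μ·λ⁻¹·(1 + q_ctr))·‖u⋆ − u_{k−1}‖ ≤ (q_ctr + μ·λ⁻¹·(1 + q_ctr))·(‖u⋆ − u_{k−1}‖ + μ·η(u_{k−1})). -/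
theorem stmt_12 {X : Type*} [NormedAddCommGroup X] [NormedSpace ℝ X]
    (qctr lam μ : ℝ) (hq0 : 0 < qctr) (hq1 : qctr < 1) (hlam : 0 < lam)
    (hμ : 0 < μ) (hsmall : qctr + μ * lam⁻¹ * (1 + qctr) < 1)
    (η : X → ℝ) (hη : ∀ v, 0 ≤ η v) (ustar uk ukm : X)
    (hctr : ‖ustar - uk‖ ≤ qctr * ‖ustar - ukm‖)
    (hup : ‖uk - ukm‖ ≤ (1 + qctr) * ‖ustar - ukm‖)
    (hfail : lam * η uk < ‖uk - ukm‖) :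
    ‖ustar - uk‖ + μ * η uk ≤
      (qctr + μ * lam⁻¹ * (1 + qctr)) * ‖ustar - ukm‖ ∧
    (qctr + μ * lam⁻¹ * (1 + qctr)) * ‖ustar - ukm‖ ≤
      (qctr + μ * lam⁻¹ * (1 + qctr)) * (‖ustar - ukm‖ + μ * η ukm) := by
  constructor
  · have hη' : η uk ≤ lam⁻¹ * ((1 + qctr) * ‖ustar - ukm‖) := by
      rw [le_inv_mul_iff₀ hlam]
      exact le_trans hfail.le hup
    nlinarith [hη uk, norm_nonneg (ustar - ukm)]
  · have hpos : 0 < qctr + μ * lam⁻¹ * (1 + qctr) := by positivity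
    exact mul_le_mul_of_nonneg_left (le_add_of_nonneg_right (mul_nonneg hμ.le (hη ukm))) hpos.le
end

section
/- Let u⋆_H and u⋆_h be the a-orthogonal projections (Galerkin solutions) of u⋆ ∈ H onto nested closed subspaces X_H ⊆ X_h of a Hilbert space with energy norm ‖·‖, and suppose |η_h(v) − η_H(w)| ≤ C_stab·‖v − w‖ (stability on common elements) and quasi-best-approximation ‖u⋆ − u⋆_h‖ ≤ ‖u⋆ − u⋆_H‖. If additionally reliability ‖u⋆ − u⋆_H‖ ≤ C_rel·η_H(u⋆_H) holds, then η_h(u⋆_h) ≤ (1 + 2·C_stab·C_rel)·η_H(u⋆_H). -/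
theorem stmt_19 {H : Type*} [NormedAddCommGroup H] [NormedSpace ℝ H]
    (Cstab Crel : ℝ) (hCstab : 0 ≤ Cstab) (hCrel : 0 ≤ Crel)
    (ustar uH uh : H) (ηH ηh : ℝ) (hηH : 0 ≤ ηH) (hηh : 0 ≤ ηh)
    (hstab : |ηh - ηH| ≤ Cstab * ‖uh - uH‖)
    (hbest : ‖ustar - uh‖ ≤ ‖ustar - uH‖)
    (hrel : ‖ustar - uH‖ ≤ Crel * ηH) :
    ηh ≤ (1 + 2 * Cstab * Crel) * ηH := by
  have htri : ‖uh - uH‖ ≤ ‖ustar - uh‖ + ‖ustar - uH‖ := by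
    calc ‖uh - uH‖ = ‖(ustar - uH) - (ustar - uh)‖ := by rw [sub_sub_sub_cancel_left]
      _ ≤ ‖ustar - uH‖ + ‖ustar - uh‖ := norm_sub_le _ _
      _ = ‖ustar - uh‖ + ‖ustar - uH‖ := by ring
  have h1 : ηh - ηH ≤ Cstab * ‖uh - uH‖ := (abs_le.mp hstab).2
  nlinarith [norm_nonneg (ustar - uh), norm_nonneg (ustar - uH),
    mul_le_mul_of_nonneg_left htri hCstab,
    mul_le_mul_of_nonneg_left hbest hCstab,
    mul_le_mul_of_nonneg_left hrel hCstab]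
end
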